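/- arXiv:1802.08634 — 6 statements merged into one kernel-verified Lean document; each statement's English description precedes it below -/
import Mathlib

section
/- If A is a row-stochastic n×n matrix all of whose entries are at least β > 0, and v = A u, then max_i v_i − min_i v_i ≤ (1 − nβ)(max_i u_i − min_i u_i). -/
/-! Write each row of `A` as `β • 1` plus a nonnegative remainder of total mass `1 - nβ`.
The `β • 1` part contributes the same amount `β ∑ⱼ uⱼ` to every entry of `A u`, so any two
entries of `A u` differ only through the remainders, hence by at most `(1 - nβ)(max u - min u)`. -/

open Matrix

theorem ciSup_sub_ciInf_le {ι : Type*} [Nonempty ι] {f : ι → ℝ} {c : ℝ} (h : ∀ i k, f i - f k ≤ c) :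
    (⨆ i, f i) - (⨅ i, f i) ≤ c := by
  rw [sub_le_iff_le_add]
  refine ciSup_le fun i => ?_
  rw [← sub_le_iff_le_add']
  exact le_ciInf fun k => by linarith [h i k]

section

variable {ι : Type*} [Fintype ι]

theorem dotProduct_le_sum_mul {w u : ι → ℝ} {M : ℝ} (hw : 0 ≤ w) (hM : ∀ j, u j ≤ M) :
    w ⬝ᵥ u ≤ (∑ j, w j) * M := by
  rw [Finset.sum_mul]
  exact Finset.sum_le_sum fun j _ => mul_le_mul_of_nonneg_left (hM j) (hw j)

theorem sum_mul_le_dotProduct {w u : ι → ℝ} {m : ℝ} (hw : 0 ≤ w) (hm : ∀ j, m ≤ u j) :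
    (∑ j, w j) * m ≤ w ⬝ᵥ u := by
  rw [Finset.sum_mul]
  exact Finset.sum_le_sum fun j _ => mul_le_mul_of_nonneg_left (hm j) (hw j)

theorem dotProduct_eq_sub_const_dotProduct_add (w u : ι → ℝ) (β : ℝ) :
    w ⬝ᵥ u = (fun j => w j - β) ⬝ᵥ u + β * ∑ j, u j := by
  simp only [dotProduct, sub_mul, Finset.sum_sub_distrib, Finset.mul_sum]
  ring

theorem sum_sub_const_of_sum_eq_one {w : ι → ℝ} (β : ℝ) (hw : ∑ j, w j = 1) :
    ∑ j, (w j - β) = 1 - Fintype.card ι * β := by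
  simp [Finset.sum_sub_distrib, hw]

theorem dotProduct_sub_dotProduct_le {a b u : ι → ℝ} {β m M : ℝ}
    (ha : ∀ j, β ≤ a j) (hb : ∀ j, β ≤ b j) (ha₁ : ∑ j, a j = 1) (hb₁ : ∑ j, b j = 1)
    (hm : ∀ j, m ≤ u j) (hM : ∀ j, u j ≤ M) :
    a ⬝ᵥ u - b ⬝ᵥ u ≤ (1 - Fintype.card ι * β) * (M - m) := by
  have hup := dotProduct_le_sum_mul (fun j => sub_nonneg.2 (ha j)) hM
  have hlo := sum_mul_le_dotProduct (fun j => sub_nonneg.2 (hb j)) hm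
  rw [sum_sub_const_of_sum_eq_one β ha₁] at hup
  rw [sum_sub_const_of_sum_eq_one β hb₁] at hlo
  rw [dotProduct_eq_sub_const_dotProduct_add a u β, dotProduct_eq_sub_const_dotProduct_add b u β]
  linarith

end

theorem stmt0_general {n : ℕ} (hn : 0 < n) (A : Matrix (Fin n) (Fin n) ℝ) (β : ℝ)
    (hAβ : ∀ i j, β ≤ A i j) (hrow : ∀ i, ∑ j, A i j = 1)
    (u v : Fin n → ℝ) (hv : v = A.mulVec u) :
    (⨆ i, v i) - (⨅ i, v i) ≤ (1 - n * β) * ((⨆ i, u i) - (⨅ i, u i)) := by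
  have : Nonempty (Fin n) := ⟨⟨0, hn⟩⟩
  subst hv
  refine ciSup_sub_ciInf_le fun i k => ?_
  have h := dotProduct_sub_dotProduct_le (hAβ i) (hAβ k) (hrow i) (hrow k)
    (ciInf_le (Finite.bddBelow_range u)) (le_ciSup (Finite.bddAbove_range u))
  rwa [Fintype.card_fin] at h

/-- If `A` is a row-stochastic `n × n` matrix all of whose entries are at least `β > 0`,
and `v = A u`, then `max v - min v ≤ (1 - nβ)(max u - min u)`. -/
theorem stmt0 {n : ℕ} (hn : 0 < n) (A : Matrix (Fin n) (Fin n) ℝ) (β : ℝ) (hβ : 0 < β)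
    (hAβ : ∀ i j, β ≤ A i j) (hrow : ∀ i, ∑ j, A i j = 1)
    (u v : Fin n → ℝ) (hv : v = A.mulVec u) :
    (⨆ i, v i) - (⨅ i, v i) ≤ (1 - n * β) * ((⨆ i, u i) - (⨅ i, u i)) :=
  stmt0_general hn A β hAβ hrow u v hv
end

section
/- Suppose (x^k) satisfies x^{μ_{kn}} = A_k x^{μ_{(k−1)n}} where each A_k is a row-stochastic matrix with all entries at least α^{λ_k}, 0 < α < 1, and λ_k ≤ −ln(k+T)/ln(α) for all k ≥ K. Then max_i x_i^{μ_{kn}} − min_i x_i^{μ_{kn}} → 0 as k → ∞, i.e., x^{μ_{kn}} converges to a vector in span{1}. -/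
/-- Row-stochastic matrices `A k` with entries at least `α^(λ k)` where
`λ k ≤ -log(k+T)/log α` for `k ≥ K`, acting on iterates `x`, force the spread
`max - min` of the iterates to tend to `0` (consensus). -/
theorem stmt7 {n : ℕ} (hn : 0 < n) (α : ℝ) (hα0 : 0 < α) (hα1 : α < 1)
    (lam : ℕ → ℝ) (K : ℕ) (hK : 1 ≤ K) (T : ℝ) (hT : 0 ≤ T)
    (hbound : ∀ k, K ≤ k → lam k ≤ - Real.log ((k : ℝ) + T) / Real.log α)
    (A : ℕ → Matrix (Fin n) (Fin n) ℝ)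
    (hAent : ∀ k i j, α ^ lam k ≤ A k i j)
    (hArow : ∀ k i, ∑ j, A k i j = 1)
    (x : ℕ → Fin n → ℝ)
    (hx : ∀ k, x (k + 1) = (A (k + 1)).mulVec (x k)) :
    Filter.Tendsto (fun k => (⨆ i, x k i) - (⨅ i, x k i)) Filter.atTop (nhds 0) := by
  haveI : Nonempty (Fin n) := ⟨⟨0, hn⟩⟩
  set S : ℕ → ℝ := fun k => (⨆ i, x k i) - (⨅ i, x k i) with hSdef
  have hbdA : ∀ k, BddAbove (Set.range (x k)) := fun k => Finite.bddAbove_range _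
  have hbdB : ∀ k, BddBelow (Set.range (x k)) := fun k => Finite.bddBelow_range _
  have hiLeS : ∀ k, (⨅ i, x k i) ≤ (⨆ i, x k i) := fun k =>
    le_trans (ciInf_le (hbdB k) (Classical.arbitrary _))
      (le_ciSup (hbdA k) (Classical.arbitrary _))
  have hSnonneg : ∀ k, 0 ≤ S k := by
    intro k
    have := hiLeS k
    simp only [hSdef]
    linarith
  have hεpos : ∀ k, 0 < α ^ lam k := fun k => Real.rpow_pos_of_pos hα0 _
  -- contraction step
  have hstep : ∀ k, S (k + 1) ≤ (1 - α ^ lam (k + 1)) * S k := by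
    intro k
    set ε := α ^ lam (k + 1) with hε
    set M := ⨆ i, x k i with hM
    set m := ⨅ i, x k i with hm
    have hmM : m ≤ M := hiLeS k
    obtain ⟨j0, hj0⟩ := Finite.exists_min (x k)
    obtain ⟨j1, hj1⟩ := Finite.exists_max (x k)
    have hmj0 : m = x k j0 := le_antisymm (ciInf_le (hbdB k) j0) (le_ciInf hj0)
    have hMj1 : M = x k j1 := le_antisymm (ciSup_le hj1) (le_ciSup (hbdA k) j1)
    have hxk1 : ∀ i, x (k + 1) i = ∑ j, A (k + 1) i j * x k j := by
      intro i
      rw [hx k]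
      simp [Matrix.mulVec, dotProduct]
    have key_up : ∀ i, x (k + 1) i ≤ M - ε * (M - m) := by
      intro i
      rw [hxk1 i]
      have hsplit : ∑ j, A (k+1) i j * x k j
          = A (k+1) i j0 * x k j0 + ∑ j ∈ Finset.univ.erase j0, A (k+1) i j * x k j :=
        (Finset.add_sum_erase _ _ (Finset.mem_univ j0)).symm
      have h1 : ∑ j ∈ Finset.univ.erase j0, A (k+1) i j * x k j
          ≤ (∑ j ∈ Finset.univ.erase j0, A (k+1) i j) * M := by
        rw [Finset.sum_mul]
        refine Finset.sum_le_sum fun j _ => ?_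
        have haj : 0 ≤ A (k+1) i j := le_trans (hεpos (k+1)).le (hAent (k+1) i j)
        exact mul_le_mul_of_nonneg_left (le_ciSup (hbdA k) j) haj
      have h2 : ∑ j ∈ Finset.univ.erase j0, A (k+1) i j = 1 - A (k+1) i j0 := by
        have h := Finset.add_sum_erase Finset.univ (fun j => A (k+1) i j)
          (Finset.mem_univ j0)
        have h' := hArow (k+1) i
        linarith
      have hεj0 : ε ≤ A (k+1) i j0 := hAent (k+1) i j0
      rw [hsplit, ← hmj0]
      rw [h2] at h1
      nlinarith [mul_nonneg (sub_nonneg.2 hεj0) (sub_nonneg.2 hmM)]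
    have key_lo : ∀ i, m + ε * (M - m) ≤ x (k + 1) i := by
      intro i
      rw [hxk1 i]
      have hsplit : ∑ j, A (k+1) i j * x k j
          = A (k+1) i j1 * x k j1 + ∑ j ∈ Finset.univ.erase j1, A (k+1) i j * x k j :=
        (Finset.add_sum_erase _ _ (Finset.mem_univ j1)).symm
      have h1 : (∑ j ∈ Finset.univ.erase j1, A (k+1) i j) * m
          ≤ ∑ j ∈ Finset.univ.erase j1, A (k+1) i j * x k j := by
        rw [Finset.sum_mul]
        refine Finset.sum_le_sum fun j _ => ?_
        have haj : 0 ≤ A (k+1) i j := le_trans (hεpos (k+1)).le (hAent (k+1) i j)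
        exact mul_le_mul_of_nonneg_left (ciInf_le (hbdB k) j) haj
      have h2 : ∑ j ∈ Finset.univ.erase j1, A (k+1) i j = 1 - A (k+1) i j1 := by
        have h := Finset.add_sum_erase Finset.univ (fun j => A (k+1) i j)
          (Finset.mem_univ j1)
        have h' := hArow (k+1) i
        linarith
      have hεj1 : ε ≤ A (k+1) i j1 := hAent (k+1) i j1
      rw [hsplit, ← hMj1]
      rw [h2] at h1
      nlinarith [mul_nonneg (sub_nonneg.2 hεj1) (sub_nonneg.2 hmM)]
    have hsup : (⨆ i, x (k+1) i) ≤ M - ε * (M - m) := ciSup_le key_up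
    have hinf : m + ε * (M - m) ≤ ⨅ i, x (k+1) i := le_ciInf key_lo
    have hεnn : 0 ≤ ε * (M - m) := mul_nonneg (hεpos (k+1)).le (by linarith)
    show (⨆ i, x (k+1) i) - (⨅ i, x (k+1) i) ≤ (1 - ε) * (M - m)
    nlinarith
  -- lower bound on the contraction coefficient
  have hεge : ∀ k, K ≤ k → ((k : ℝ) + T)⁻¹ ≤ α ^ lam k := by
    intro k hk
    have hk1 : (1 : ℝ) ≤ (k : ℝ) := by exact_mod_cast hK.trans hk
    have hc : (0 : ℝ) < (k : ℝ) + T := by linarith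
    have hlogα : Real.log α ≠ 0 := ne_of_lt (Real.log_neg hα0 hα1)
    have h1 : α ^ (-Real.log ((k : ℝ) + T) / Real.log α) ≤ α ^ lam k :=
      Real.rpow_le_rpow_of_exponent_ge hα0 hα1.le (hbound k hk)
    have h2 : α ^ (-Real.log ((k : ℝ) + T) / Real.log α) = ((k : ℝ) + T)⁻¹ := by
      rw [Real.rpow_def_of_pos hα0]
      have : Real.log α * (-Real.log ((k : ℝ) + T) / Real.log α)
          = -Real.log ((k : ℝ) + T) := by
        field_simp
      rw [this, Real.exp_neg, Real.exp_log hc]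
    rw [h2] at h1
    exact h1
  -- telescoping decay
  have claim : ∀ m : ℕ, S (K + m) ≤ (S K * ((K : ℝ) + T)) / ((K : ℝ) + m + T) := by
    intro m
    induction m with
    | zero =>
      have hK1 : (1 : ℝ) ≤ (K : ℝ) := by exact_mod_cast hK
      have hc : (0 : ℝ) < (K : ℝ) + T := by linarith
      simp only [Nat.add_zero, Nat.cast_zero, add_zero]
      rw [mul_div_assoc, div_self hc.ne', mul_one]
    | succ m ih =>
      have hK1 : (1 : ℝ) ≤ (K : ℝ) := by exact_mod_cast hK
      have hm0 : (0 : ℝ) ≤ (m : ℝ) := Nat.cast_nonneg m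
      have hbpos : 0 < (K : ℝ) + m + T := by linarith
      have hcpos : 0 < (K : ℝ) + m + T + 1 := by linarith
      have hε : ((K : ℝ) + m + T + 1)⁻¹ ≤ α ^ lam (K + (m + 1)) := by
        have h := hεge (K + (m + 1)) (Nat.le_add_right _ _)
        have hcast : ((K + (m + 1) : ℕ) : ℝ) + T = (K : ℝ) + m + T + 1 := by
          push_cast; ring
        rw [hcast] at h
        exact h
      have hstep' : S (K + (m + 1)) ≤ (1 - α ^ lam (K + (m + 1))) * S (K + m) :=
        hstep (K + m)
      have hSm := hSnonneg (K + m)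
      have hS1 : S (K + (m + 1)) ≤ (1 - ((K : ℝ) + m + T + 1)⁻¹) * S (K + m) :=
        le_trans hstep' (mul_le_mul_of_nonneg_right (by linarith) hSm)
      have hfac : 0 ≤ 1 - ((K : ℝ) + m + T + 1)⁻¹ := by
        have h1 : ((K : ℝ) + m + T + 1)⁻¹ ≤ 1 := by
          rw [inv_le_one_iff₀]; right; linarith
        linarith
      have hS2 : S (K + (m + 1))
          ≤ (1 - ((K : ℝ) + m + T + 1)⁻¹) * ((S K * ((K : ℝ) + T)) / ((K : ℝ) + m + T)) :=
        le_trans hS1 (mul_le_mul_of_nonneg_left ih hfac)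
      have heq : (1 - ((K : ℝ) + m + T + 1)⁻¹) * ((S K * ((K : ℝ) + T)) / ((K : ℝ) + m + T))
          = (S K * ((K : ℝ) + T)) / ((K : ℝ) + m + T + 1) := by
        field_simp
        ring
      have hcast2 : (K : ℝ) + ((m + 1 : ℕ) : ℝ) + T = (K : ℝ) + m + T + 1 := by
        push_cast; ring
      rw [hcast2, ← heq]
      exact hS2
  -- squeeze
  have hg : Filter.Tendsto (fun k : ℕ => (S K * ((K : ℝ) + T)) / ((k : ℝ) + T))
      Filter.atTop (nhds 0) := by
    apply Filter.Tendsto.div_atTop (tendsto_const_nhds)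
    exact Filter.tendsto_atTop_add_const_right _ T tendsto_natCast_atTop_atTop
  refine squeeze_zero' (Filter.Eventually.of_forall hSnonneg) ?_ hg
  rw [Filter.eventually_atTop]
  refine ⟨K, fun k hk => ?_⟩
  obtain ⟨m, rfl⟩ := Nat.exists_eq_add_of_le hk
  simpa [Nat.cast_add] using claim m
end

section
/- If stochastic matrices A_k (k=1,…,l) each have all entries ≥ β_k > 0 and x^{(k)} = A_k x^{(k−1)}, then max_i x_i^{(l)} − min_i x_i^{(l)} ≤ ∏_{k=1}^l (1 − n β_k) · (max_i x_i^{(0)} − min_i x_i^{(0)}). -/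
/-!
Write `A = β J + (A - β J)` with `J` the all-ones matrix. The first part sends `x` to the constant
vector `β ∑ⱼ xⱼ`, and the second has nonnegative entries with row sums `1 - n β`, so every entry
of `A x` lies between `β ∑ⱼ xⱼ + (1 - n β) min x` and `β ∑ⱼ xⱼ + (1 - n β) max x`. Hence one step
shrinks the spread `max - min` by the factor `1 - n β`, and the theorem follows by induction.
-/

open Finset Matrix

section Contraction

variable {ι : Type*} [Fintype ι]

lemma mulVec_apply_eq_const_mul_sum_add (A : Matrix ι ι ℝ) (β : ℝ) (x : ι → ℝ) (i : ι) :
    (A *ᵥ x) i = β * ∑ j, x j + ∑ j, (A i j - β) * x j := by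
  simp only [mulVec, dotProduct, mul_sum, ← sum_add_distrib]
  exact sum_congr rfl fun j _ => by ring

lemma mulVec_apply_le_of_le {A : Matrix ι ι ℝ} {β M : ℝ} (hA : ∀ i j, β ≤ A i j)
    (hrow : ∀ i, ∑ j, A i j = 1) {x : ι → ℝ} (hM : ∀ j, x j ≤ M) (i : ι) :
    (A *ᵥ x) i ≤ β * ∑ j, x j + (1 - Fintype.card ι * β) * M := by
  have hweights : ∑ j, (A i j - β) = 1 - Fintype.card ι * β := by
    simp [sum_sub_distrib, hrow i]
  calc (A *ᵥ x) i = β * ∑ j, x j + ∑ j, (A i j - β) * x j :=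
        mulVec_apply_eq_const_mul_sum_add A β x i
    _ ≤ β * ∑ j, x j + ∑ j, (A i j - β) * M := by
        gcongr with j
        exacts [sub_nonneg.2 (hA i j), hM j]
    _ = β * ∑ j, x j + (1 - Fintype.card ι * β) * M := by rw [← sum_mul, hweights]

lemma le_mulVec_apply_of_le {A : Matrix ι ι ℝ} {β m : ℝ} (hA : ∀ i j, β ≤ A i j)
    (hrow : ∀ i, ∑ j, A i j = 1) {x : ι → ℝ} (hm : ∀ j, m ≤ x j) (i : ι) :
    β * ∑ j, x j + (1 - Fintype.card ι * β) * m ≤ (A *ᵥ x) i := by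
  have h := mulVec_apply_le_of_le hA hrow (x := -x) (M := -m) (fun j => neg_le_neg (hm j)) i
  simp only [mulVec_neg, Pi.neg_apply, sum_neg_distrib] at h
  linarith

lemma iSup_sub_iInf_mulVec_le [Nonempty ι] {A : Matrix ι ι ℝ} {β : ℝ}
    (hA : ∀ i j, β ≤ A i j) (hrow : ∀ i, ∑ j, A i j = 1) (x : ι → ℝ) :
    (⨆ i, (A *ᵥ x) i) - (⨅ i, (A *ᵥ x) i) ≤
      (1 - Fintype.card ι * β) * ((⨆ i, x i) - (⨅ i, x i)) := by
  have hsup := ciSup_le <| mulVec_apply_le_of_le hA hrow fun j =>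
    le_ciSup (Finite.bddAbove_range x) j
  have hinf := le_ciInf <| le_mulVec_apply_of_le hA hrow fun j =>
    ciInf_le (Finite.bddBelow_range x) j
  linarith

end Contraction

/-- Iterating row-stochastic matrices `A k` with entries at least `β k` contracts
the spread `max - min` by the factor `∏ (1 - n β k)`. -/
theorem stmt8 {n : ℕ} (hn : 0 < n) (l : ℕ) (A : ℕ → Matrix (Fin n) (Fin n) ℝ)
    (β : ℕ → ℝ) (hβ : ∀ k, 0 < β k ∧ (n : ℝ) * β k ≤ 1)
    (hA : ∀ k i j, β k ≤ A k i j) (hrow : ∀ k i, ∑ j, A k i j = 1)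
    (x : ℕ → Fin n → ℝ) (hx : ∀ k, x (k + 1) = (A (k + 1)).mulVec (x k)) :
    (⨆ i, x l i) - (⨅ i, x l i) ≤
      (∏ k ∈ Finset.Icc 1 l, (1 - (n : ℝ) * β k)) * ((⨆ i, x 0 i) - (⨅ i, x 0 i)) := by
  have : Nonempty (Fin n) := Fin.pos_iff_nonempty.mp hn
  induction l with
  | zero => simp
  | succ l ih =>
    have hstep := iSup_sub_iInf_mulVec_le (hA (l + 1)) (hrow (l + 1)) (x l)
    rw [Fintype.card_fin, ← hx l] at hstep
    have hfactor : 0 ≤ 1 - (n : ℝ) * β (l + 1) := sub_nonneg.2 (hβ (l + 1)).2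
    calc (⨆ i, x (l + 1) i) - (⨅ i, x (l + 1) i)
        ≤ (1 - (n : ℝ) * β (l + 1)) * ((⨆ i, x l i) - (⨅ i, x l i)) := hstep
      _ ≤ (1 - (n : ℝ) * β (l + 1)) *
            ((∏ k ∈ Icc 1 l, (1 - (n : ℝ) * β k)) * ((⨆ i, x 0 i) - (⨅ i, x 0 i))) := by
          gcongr
      _ = (∏ k ∈ Icc 1 (l + 1), (1 - (n : ℝ) * β k)) * ((⨆ i, x 0 i) - (⨅ i, x 0 i)) := by
          rw [prod_Icc_succ_top (by omega)]; ring
end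

section
/- Suppose z^{k+1} = P^k z^k where each P^k is row-stochastic, and for each k ≥ 1 the block product P^{μ_{kn}−1} ⋯ P^{μ_{(k−1)n}} has all entries at least α_k := (1/n)^{λ_k + λ_{k−1}}, with λ_k ≤ ln(k+T)/(2 ln n) for all k ≥ K. Then ∑_{k=K}^∞ n α_k = ∞, and consequently max_i z_i^k − min_i z_i^k → 0, so all z_i^k converge to a common limit. -/
/-- The ordered product `P^(b-1) * P^(b-2) * ⋯ * P^a` of a sequence of matrices. -/
def matProd {n : ℕ} (P : ℕ → Matrix (Fin n) (Fin n) ℝ) (a b : ℕ) :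
    Matrix (Fin n) (Fin n) ℝ :=
  ((List.range (b - a)).map (fun t => P (b - 1 - t))).prod


lemma matProd_self {n : ℕ} (P : ℕ → Matrix (Fin n) (Fin n) ℝ) (a : ℕ) : matProd P a a = 1 := by
  simp [matProd]

lemma matProd_succ {n : ℕ} (P : ℕ → Matrix (Fin n) (Fin n) ℝ) {a b : ℕ} (h : a ≤ b) :
    matProd P a (b + 1) = P b * matProd P a b := by
  unfold matProd
  have h1 : b + 1 - a = (b - a) + 1 := by omega
  rw [h1, List.range_succ_eq_map]
  simp only [List.map_cons, List.prod_cons, List.map_map]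
  have h2 : b + 1 - 1 - 0 = b := by omega
  rw [h2]
  congr 1
  congr 1
  apply List.map_congr_left
  intro t _
  have h3 : b - (t + 1) = b - 1 - t := by omega
  simp [Function.comp, Nat.succ_eq_add_one, h3]

lemma z_matProd {n : ℕ} (P : ℕ → Matrix (Fin n) (Fin n) ℝ) (z : ℕ → Fin n → ℝ)
    (hz : ∀ k, z (k + 1) = (P k).mulVec (z k)) {a b : ℕ} (h : a ≤ b) :
    z b = (matProd P a b).mulVec (z a) := by
  obtain ⟨d, rfl⟩ := Nat.exists_eq_add_of_le h
  clear h
  induction d with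
  | zero => simp [matProd_self, Matrix.one_mulVec]
  | succ d ih =>
      rw [show a + (d + 1) = (a + d) + 1 by ring, hz, ih,
        matProd_succ P (Nat.le_add_right a d), ← Matrix.mulVec_mulVec]

lemma matProd_nonneg {n : ℕ} (P : ℕ → Matrix (Fin n) (Fin n) ℝ)
    (hP : ∀ k i j, 0 ≤ P k i j) {a b : ℕ} (h : a ≤ b) :
    ∀ i j, 0 ≤ matProd P a b i j := by
  obtain ⟨d, rfl⟩ := Nat.exists_eq_add_of_le h
  clear h
  induction d with
  | zero => intro i j; simp [matProd_self, Matrix.one_apply]; positivity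
  | succ d ih =>
      intro i j
      rw [show a + (d + 1) = (a + d) + 1 by ring, matProd_succ P (Nat.le_add_right a d)]
      rw [Matrix.mul_apply]
      exact Finset.sum_nonneg fun l _ => mul_nonneg (hP _ _ _) (ih l j)

lemma matProd_rowsum {n : ℕ} (P : ℕ → Matrix (Fin n) (Fin n) ℝ)
    (hP : ∀ k i, ∑ j, P k i j = 1) {a b : ℕ} (h : a ≤ b) :
    ∀ i, ∑ j, matProd P a b i j = 1 := by
  obtain ⟨d, rfl⟩ := Nat.exists_eq_add_of_le h
  clear h
  induction d with
  | zero => intro i; simp [matProd_self, Matrix.one_apply]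
  | succ d ih =>
      intro i
      rw [show a + (d + 1) = (a + d) + 1 by ring, matProd_succ P (Nat.le_add_right a d)]
      simp only [Matrix.mul_apply]
      rw [Finset.sum_comm]
      calc ∑ l, ∑ j, P (a + d) i l * matProd P a (a + d) l j
          = ∑ l, P (a + d) i l * ∑ j, matProd P a (a + d) l j := by
            simp [Finset.mul_sum]
        _ = 1 := by simp [ih, hP]

lemma mulVec_le_sup {n : ℕ} [Nonempty (Fin n)] (Q : Matrix (Fin n) (Fin n) ℝ)
    (hQ0 : ∀ i j, 0 ≤ Q i j) (hQ1 : ∀ i, ∑ j, Q i j = 1) (w : Fin n → ℝ) (i : Fin n) :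
    Q.mulVec w i ≤ ⨆ j, w j := by
  have hbdd : BddAbove (Set.range w) := (Set.finite_range w).bddAbove
  calc Q.mulVec w i = ∑ l, Q i l * w l := rfl
    _ ≤ ∑ l, Q i l * (⨆ j, w j) :=
        Finset.sum_le_sum fun l _ => mul_le_mul_of_nonneg_left (le_ciSup hbdd l) (hQ0 i l)
    _ = ⨆ j, w j := by rw [← Finset.sum_mul, hQ1, one_mul]

lemma inf_le_mulVec {n : ℕ} [Nonempty (Fin n)] (Q : Matrix (Fin n) (Fin n) ℝ)
    (hQ0 : ∀ i j, 0 ≤ Q i j) (hQ1 : ∀ i, ∑ j, Q i j = 1) (w : Fin n → ℝ) (i : Fin n) :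
    (⨅ j, w j) ≤ Q.mulVec w i := by
  have hbdd : BddBelow (Set.range w) := (Set.finite_range w).bddBelow
  calc (⨅ j, w j) = ∑ l, Q i l * (⨅ j, w j) := by rw [← Finset.sum_mul, hQ1, one_mul]
    _ ≤ ∑ l, Q i l * w l :=
        Finset.sum_le_sum fun l _ => mul_le_mul_of_nonneg_left (ciInf_le hbdd l) (hQ0 i l)
    _ = Q.mulVec w i := rfl

lemma spread_contract {n : ℕ} [Nonempty (Fin n)] (Q : Matrix (Fin n) (Fin n) ℝ)
    (α : ℝ) (hα : 0 ≤ α) (hQα : ∀ i j, α ≤ Q i j) (hQ1 : ∀ i, ∑ j, Q i j = 1)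
    (w : Fin n → ℝ) :
    (⨆ i, Q.mulVec w i) - (⨅ i, Q.mulVec w i) ≤
      (1 - (n : ℝ) * α) * ((⨆ i, w i) - ⨅ i, w i) := by
  obtain ⟨i0⟩ := (inferInstance : Nonempty (Fin n))
  have hbdd : BddAbove (Set.range w) := (Set.finite_range w).bddAbove
  have hbddb : BddBelow (Set.range w) := (Set.finite_range w).bddBelow
  have hcard : (Finset.univ : Finset (Fin n)).card = n := by simp
  have hnα : (n : ℝ) * α ≤ 1 := by
    have := hQ1 i0
    calc (n : ℝ) * α = ∑ _l : Fin n, α := by rw [Finset.sum_const, hcard, nsmul_eq_mul]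
      _ ≤ ∑ l, Q i0 l := Finset.sum_le_sum fun l _ => hQα i0 l
      _ = 1 := hQ1 i0
  set M := ⨆ i, w i with hM
  set m := ⨅ i, w i with hm
  set S := ∑ l, w l with hS
  have hsumα : ∀ i, ∑ l, (Q i l - α) = 1 - (n : ℝ) * α := by
    intro i
    rw [Finset.sum_sub_distrib, hQ1, Finset.sum_const, hcard, nsmul_eq_mul]
  have hup : ∀ i, Q.mulVec w i ≤ (1 - (n : ℝ) * α) * M + α * S := by
    intro i
    calc Q.mulVec w i = ∑ l, Q i l * w l := rfl
      _ = ∑ l, ((Q i l - α) * w l + α * w l) := by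
          apply Finset.sum_congr rfl; intro l _; ring
      _ = (∑ l, (Q i l - α) * w l) + α * S := by
          rw [Finset.sum_add_distrib, Finset.mul_sum]
      _ ≤ (∑ l, (Q i l - α) * M) + α * S := by
          gcongr with l
          · exact sub_nonneg.2 (hQα i l)
          · exact le_ciSup hbdd l
      _ = (1 - (n : ℝ) * α) * M + α * S := by
          rw [← Finset.sum_mul, hsumα]
  have hlo : ∀ i, (1 - (n : ℝ) * α) * m + α * S ≤ Q.mulVec w i := by
    intro i
    calc (1 - (n : ℝ) * α) * m + α * S = (∑ l, (Q i l - α) * m) + α * S := by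
          rw [← Finset.sum_mul, hsumα]
      _ ≤ (∑ l, (Q i l - α) * w l) + α * S := by
          gcongr with l
          · exact sub_nonneg.2 (hQα i l)
          · exact ciInf_le hbddb l
      _ = ∑ l, ((Q i l - α) * w l + α * w l) := by
          rw [Finset.sum_add_distrib, Finset.mul_sum]
      _ = ∑ l, Q i l * w l := by
          apply Finset.sum_congr rfl; intro l _; ring
      _ = Q.mulVec w i := rfl
  have h1 : (⨆ i, Q.mulVec w i) ≤ (1 - (n : ℝ) * α) * M + α * S := ciSup_le hup
  have h2 : (1 - (n : ℝ) * α) * m + α * S ≤ ⨅ i, Q.mulVec w i := le_ciInf hlo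
  have : (⨆ i, Q.mulVec w i) - (⨅ i, Q.mulVec w i) ≤
      ((1 - (n : ℝ) * α) * M + α * S) - ((1 - (n : ℝ) * α) * m + α * S) := by
    exact sub_le_sub h1 h2
  linarith [this]

lemma not_summable_part {n : ℕ} (hn : 2 ≤ n) (lam : ℕ → ℝ) (hlamnn : ∀ k, 0 ≤ lam k)
    (K : ℕ) (hK : 1 ≤ K) (T : ℝ) (hT : 0 ≤ T)
    (hbound : ∀ k, K ≤ k → lam k ≤ Real.log ((k : ℝ) + T) / (2 * Real.log n)) :
    ¬ Summable (fun k : ℕ => (n : ℝ) * ((1 : ℝ) / n) ^ (lam k + lam (k - 1))) := by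
  set f : ℕ → ℝ := fun k => (n : ℝ) * ((1 : ℝ) / n) ^ (lam k + lam (k - 1)) with hf
  have hn1 : (1 : ℝ) < n := by exact_mod_cast hn
  have hn0 : (0 : ℝ) < n := by linarith
  have hlogn : 0 < Real.log n := Real.log_pos hn1
  have hx0 : (0 : ℝ) < 1 / n := by positivity
  have hx1 : (1 : ℝ) / n ≤ 1 := by
    rw [div_le_one hn0]; linarith
  have h1T : (0 : ℝ) < 1 + T := by linarith
  -- key pointwise lower bound
  have key : ∀ k : ℕ, K + 1 ≤ k → ((1 + T) * k)⁻¹ ≤ f k := by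
    intro k hk
    have hk1 : (1 : ℝ) ≤ k := by exact_mod_cast Nat.one_le_iff_ne_zero.2 (by omega)
    have hkT : (0 : ℝ) < (k : ℝ) + T := by linarith
    have hcast : ((k - 1 : ℕ) : ℝ) = (k : ℝ) - 1 := by
      have : 1 ≤ k := by omega
      push_cast [this]; ring
    have hk1T : (0 : ℝ) < ((k - 1 : ℕ) : ℝ) + T := by
      rw [hcast]
      have : (2 : ℝ) ≤ k := by exact_mod_cast (by omega : 2 ≤ k)
      linarith
    have hb1 : lam k ≤ Real.log ((k : ℝ) + T) / (2 * Real.log n) :=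
      hbound k (by omega)
    have hb2 : lam (k - 1) ≤ Real.log ((k : ℝ) + T) / (2 * Real.log n) := by
      refine (hbound (k - 1) (by omega)).trans ?_
      apply div_le_div_of_nonneg_right ?_ (by positivity) |>.trans le_rfl
      · exact Real.log_le_log hk1T (by rw [hcast]; linarith)
    have hexp : lam k + lam (k - 1) ≤ Real.log ((k : ℝ) + T) / Real.log n := by
      have := add_le_add hb1 hb2
      calc lam k + lam (k - 1) ≤ Real.log ((k : ℝ) + T) / (2 * Real.log n) +
            Real.log ((k : ℝ) + T) / (2 * Real.log n) := this
        _ = Real.log ((k : ℝ) + T) / Real.log n := by field_simp; ring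
    have hrpow : ((1 : ℝ) / n) ^ (Real.log ((k : ℝ) + T) / Real.log n) ≤
        ((1 : ℝ) / n) ^ (lam k + lam (k - 1)) :=
      Real.rpow_le_rpow_of_exponent_ge hx0 hx1 hexp
    have hcompute : ((1 : ℝ) / n) ^ (Real.log ((k : ℝ) + T) / Real.log n) =
        ((k : ℝ) + T)⁻¹ := by
      rw [Real.rpow_def_of_pos hx0, one_div, Real.log_inv,
        show -Real.log n * (Real.log ((k : ℝ) + T) / Real.log n) = -Real.log ((k : ℝ) + T) by
          field_simp,
        Real.exp_neg, Real.exp_log hkT]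
    have h1 : ((k : ℝ) + T)⁻¹ ≤ ((1 : ℝ) / n) ^ (lam k + lam (k - 1)) := by
      rw [← hcompute]; exact hrpow
    have h2 : ((1 + T) * k)⁻¹ ≤ ((k : ℝ) + T)⁻¹ := by
      apply inv_anti₀ hkT
      have : (k : ℝ) + T * 1 ≤ k + T * k := by nlinarith
      nlinarith
    calc ((1 + T) * k)⁻¹ ≤ ((k : ℝ) + T)⁻¹ := h2
      _ ≤ ((1 : ℝ) / n) ^ (lam k + lam (k - 1)) := h1
      _ ≤ f k := by
          rw [hf]
          exact le_mul_of_one_le_left (by positivity) (by linarith)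
  intro hs
  set g : ℕ → ℝ := fun k => ((1 + T) * k)⁻¹ with hg
  have h1 : Summable fun k => f (k + (K + 1)) := (summable_nat_add_iff (K + 1)).2 hs
  have h2 : Summable fun k => g (k + (K + 1)) := by
    apply Summable.of_nonneg_of_le (fun k => by positivity) (fun k => ?_) h1
    exact key (k + (K + 1)) (by omega)
  have h3 : Summable g := (summable_nat_add_iff (K + 1)).1 h2
  have h4 : Summable fun k : ℕ => ((k : ℝ))⁻¹ := by
    have := h3.mul_left (1 + T)
    refine this.congr fun k => ?_
    rw [hg]
    simp only [mul_inv]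
    rw [mul_inv_cancel_left₀ (ne_of_gt h1T)]
  exact Real.not_summable_natCast_inv h4

/-- If the block products of the row-stochastic matrices `P k` have entries at least
`α_k = (1/n)^(λ k + λ (k-1))` with `λ k ≤ log(k+T)/(2 log n)` for `k ≥ K`, then
`∑ n α_k = ∞`, the spread of the iterates `z` tends to `0`, and all coordinates of
`z` converge to a common limit. -/
theorem stmt11 {n : ℕ} (hn : 2 ≤ n)
    (lam : ℕ → ℝ) (hlam0 : lam 0 = 0) (hlamnn : ∀ k, 0 ≤ lam k)
    (K : ℕ) (hK : 1 ≤ K) (T : ℝ) (hT : 0 ≤ T)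
    (hbound : ∀ k, K ≤ k → lam k ≤ Real.log ((k : ℝ) + T) / (2 * Real.log n))
    (P : ℕ → Matrix (Fin n) (Fin n) ℝ)
    (hPpos : ∀ k i j, 0 ≤ P k i j) (hProw : ∀ k i, ∑ j, P k i j = 1)
    (μ : ℕ → ℕ) (hμ0 : μ 0 = 0) (hμ : StrictMono μ)
    (hblock : ∀ k, 1 ≤ k → ∀ i j,
      ((1 : ℝ) / n) ^ (lam k + lam (k - 1)) ≤ matProd P (μ ((k - 1) * n)) (μ (k * n)) i j)
    (z : ℕ → Fin n → ℝ) (hz : ∀ k, z (k + 1) = (P k).mulVec (z k)) :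
    (¬ Summable (fun k : ℕ => (n : ℝ) * ((1 : ℝ) / n) ^ (lam k + lam (k - 1)))) ∧
      Filter.Tendsto (fun k => (⨆ i, z k i) - (⨅ i, z k i)) Filter.atTop (nhds 0) ∧
      ∃ L : ℝ, ∀ i, Filter.Tendsto (fun k => z k i) Filter.atTop (nhds L) := by
  haveI : Nonempty (Fin n) := ⟨⟨0, by omega⟩⟩
  obtain ⟨i0⟩ := (inferInstance : Nonempty (Fin n))
  have hn0R : (0 : ℝ) < n := by positivity
  set a : ℕ → ℝ := fun k => (n : ℝ) * ((1 : ℝ) / n) ^ (lam k + lam (k - 1)) with ha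
  have hdiv : ¬ Summable a := not_summable_part hn lam hlamnn K hK T hT hbound
  have ha0 : ∀ k, 0 ≤ a k := by
    intro k
    have := Real.rpow_nonneg (by positivity : (0:ℝ) ≤ 1 / n) (lam k + lam (k - 1))
    positivity
  set M : ℕ → ℝ := fun k => ⨆ i, z k i with hM
  set m : ℕ → ℝ := fun k => ⨅ i, z k i with hm
  set D : ℕ → ℝ := fun k => M k - m k with hD
  have hbA : ∀ k, BddAbove (Set.range (z k)) := fun k => (Set.finite_range _).bddAbove
  have hbB : ∀ k, BddBelow (Set.range (z k)) := fun k => (Set.finite_range _).bddBelow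
  have hstepM : ∀ k, M (k + 1) ≤ M k :=
    fun k => ciSup_le fun i => by
      rw [hz k]; exact mulVec_le_sup _ (hPpos k) (hProw k) _ i
  have hstepm : ∀ k, m k ≤ m (k + 1) :=
    fun k => le_ciInf fun i => by
      rw [hz k]; exact inf_le_mulVec _ (hPpos k) (hProw k) _ i
  have hManti : Antitone M := antitone_nat_of_succ_le hstepM
  have hmmono : Monotone m := monotone_nat_of_le_succ hstepm
  have hmM : ∀ k, m k ≤ M k :=
    fun k => (ciInf_le (hbB k) i0).trans (le_ciSup (hbA k) i0)
  have hD0 : ∀ k, 0 ≤ D k := fun k => sub_nonneg.2 (hmM k)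
  have hDanti : Antitone D :=
    antitone_nat_of_succ_le fun k => sub_le_sub (hstepM k) (hstepm k)
  have hμle : ∀ k : ℕ, μ (k * n) ≤ μ ((k + 1) * n) := by
    intro k
    have h1 : (k + 1) * n = k * n + n := by ring
    exact le_of_lt (hμ (by omega))
  -- block matrices
  have hQrow : ∀ k : ℕ, ∀ i, ∑ j, matProd P (μ (k * n)) (μ ((k + 1) * n)) i j = 1 :=
    fun k => matProd_rowsum P hProw (hμle k)
  have hQα : ∀ k : ℕ, ∀ i j,
      ((1 : ℝ) / n) ^ (lam (k + 1) + lam k) ≤ matProd P (μ (k * n)) (μ ((k + 1) * n)) i j := by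
    intro k i j
    have := hblock (k + 1) (by omega) i j
    simpa using this
  have haeq : ∀ k : ℕ, a (k + 1) = (n : ℝ) * ((1 : ℝ) / n) ^ (lam (k + 1) + lam k) := by
    intro k; simp [ha]
  have han : ∀ k : ℕ, a (k + 1) ≤ 1 := by
    intro k
    rw [haeq k]
    calc (n : ℝ) * ((1 : ℝ) / n) ^ (lam (k + 1) + lam k)
        = ∑ _j : Fin n, ((1 : ℝ) / n) ^ (lam (k + 1) + lam k) := by
          rw [Finset.sum_const]; simp [nsmul_eq_mul]
      _ ≤ ∑ j, matProd P (μ (k * n)) (μ ((k + 1) * n)) i0 j :=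
          Finset.sum_le_sum fun j _ => hQα k i0 j
      _ = 1 := hQrow k i0
  have hstep : ∀ k : ℕ, D (μ ((k + 1) * n)) ≤ (1 - a (k + 1)) * D (μ (k * n)) := by
    intro k
    have hw : z (μ ((k + 1) * n)) = (matProd P (μ (k * n)) (μ ((k + 1) * n))).mulVec
        (z (μ (k * n))) := z_matProd P z hz (hμle k)
    have hαnn : 0 ≤ ((1 : ℝ) / n) ^ (lam (k + 1) + lam k) :=
      Real.rpow_nonneg (by positivity) _
    have := spread_contract (matProd P (μ (k * n)) (μ ((k + 1) * n)))
      (((1 : ℝ) / n) ^ (lam (k + 1) + lam k)) hαnn (hQα k) (hQrow k) (z (μ (k * n)))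
    rw [haeq k]
    simp only [hD, hM, hm]
    rw [hw]
    exact this
  have hprod : ∀ k : ℕ, D (μ (k * n)) ≤ D 0 * ∏ j ∈ Finset.Icc 1 k, (1 - a j) := by
    intro k
    induction k with
    | zero => simp [hμ0]
    | succ k ih =>
        have h1 : 0 ≤ 1 - a (k + 1) := by linarith [han k]
        calc D (μ ((k + 1) * n)) ≤ (1 - a (k + 1)) * D (μ (k * n)) := hstep k
          _ ≤ (1 - a (k + 1)) * (D 0 * ∏ j ∈ Finset.Icc 1 k, (1 - a j)) :=
              mul_le_mul_of_nonneg_left ih h1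
          _ = D 0 * ∏ j ∈ Finset.Icc 1 (k + 1), (1 - a j) := by
              rw [Finset.prod_Icc_succ_top (by omega)]; ring
  have hprodexp : ∀ k : ℕ, (∏ j ∈ Finset.Icc 1 k, (1 - a j)) ≤
      Real.exp (-∑ j ∈ Finset.Icc 1 k, a j) := by
    intro k
    have h1 : ∀ j ∈ Finset.Icc 1 k, 0 ≤ 1 - a j := by
      intro j hj
      obtain ⟨j', rfl⟩ : ∃ j', j = j' + 1 := by
        rcases Finset.mem_Icc.1 hj with ⟨h, _⟩; exact ⟨j - 1, by omega⟩
      linarith [han j']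
    calc (∏ j ∈ Finset.Icc 1 k, (1 - a j)) ≤ ∏ j ∈ Finset.Icc 1 k, Real.exp (-a j) :=
          Finset.prod_le_prod h1 fun j _ => by linarith [Real.add_one_le_exp (-a j)]
      _ = Real.exp (-∑ j ∈ Finset.Icc 1 k, a j) := by
          rw [← Real.exp_sum]
          congr 1
          rw [Finset.sum_neg_distrib]
  have hsh : ¬ Summable fun j => a (j + 1) := fun h => hdiv ((summable_nat_add_iff 1).1 h)
  have htend0 : Filter.Tendsto (fun k => ∑ j ∈ Finset.range k, a (j + 1))
      Filter.atTop Filter.atTop :=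
    (not_summable_iff_tendsto_nat_atTop_of_nonneg fun j => ha0 _).1 hsh
  have hIcc : ∀ k : ℕ, ∑ j ∈ Finset.Icc 1 k, a j = ∑ j ∈ Finset.range k, a (j + 1) := by
    intro k
    induction k with
    | zero => simp
    | succ k ih => rw [Finset.sum_Icc_succ_top (by omega), Finset.sum_range_succ, ih]
  have htendsum : Filter.Tendsto (fun k => ∑ j ∈ Finset.Icc 1 k, a j)
      Filter.atTop Filter.atTop := htend0.congr fun k => (hIcc k).symm
  have hexp0 : Filter.Tendsto (fun k => D 0 * Real.exp (-∑ j ∈ Finset.Icc 1 k, a j))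
      Filter.atTop (nhds 0) := by
    have h1 : Filter.Tendsto (fun k => Real.exp (-∑ j ∈ Finset.Icc 1 k, a j))
        Filter.atTop (nhds 0) :=
      Real.tendsto_exp_atBot.comp (Filter.tendsto_neg_atBot_iff.2 htendsum)
    simpa using h1.const_mul (D 0)
  have hDsub : Filter.Tendsto (fun k => D (μ (k * n))) Filter.atTop (nhds 0) :=
    squeeze_zero (fun k => hD0 _)
      (fun k => (hprod k).trans (mul_le_mul_of_nonneg_left (hprodexp k) (hD0 0))) hexp0
  have hDtend : Filter.Tendsto D Filter.atTop (nhds 0) := by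
    rw [Metric.tendsto_atTop]
    intro ε hε
    obtain ⟨N, hN⟩ := Metric.tendsto_atTop.1 hDsub ε hε
    refine ⟨μ (N * n), fun k hk => ?_⟩
    have h1 : D k ≤ D (μ (N * n)) := hDanti hk
    have h2 := hN N le_rfl
    rw [Real.dist_eq, sub_zero, abs_of_nonneg (hD0 _)] at h2 ⊢
    linarith
  have hbddM : BddBelow (Set.range M) := by
    refine ⟨m 0, ?_⟩
    rintro x ⟨k, rfl⟩
    exact (hmmono (Nat.zero_le k)).trans (hmM k)
  have hMtend : Filter.Tendsto M Filter.atTop (nhds (⨅ k, M k)) :=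
    tendsto_atTop_ciInf hManti hbddM
  have hmtend : Filter.Tendsto m Filter.atTop (nhds (⨅ k, M k)) := by
    have h1 : (fun k => M k - D k) = m := by funext k; simp [hD]
    have h2 := hMtend.sub hDtend
    rw [sub_zero] at h2
    rwa [h1] at h2
  refine ⟨hdiv, hDtend, ⟨⨅ k, M k, fun i => ?_⟩⟩
  exact tendsto_of_tendsto_of_tendsto_of_le_of_le hmtend hMtend
    (fun k => ciInf_le (hbB k) i) (fun k => le_ciSup (hbA k) i)
end

section
/- Suppose nonnegative sequences (s^k), (t^k) satisfy 0 ≤ t^k ≤ s^k, s^{k+1} ≤ β^k t^k + (1−β^k) s^k, and t^{k+1} ≤ (1 − n β^k) s^k, where 0 < n β^k ≤ 1 and 0 < β^k ≤ 1. Then s^{k+1} ≤ (1 − n β^k β^{k−1}) s^{k−1} for all k ≥ 1, and if ∑_{k=1}^∞ β^{2k} β^{2k−1} = ∞ then s^k → 0. -/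
/-!
Since `t^k ≤ s^k`, the sequence `s` is nonincreasing, and substituting the bound on `t^k`
into the recursion for `s^(k+1)` gives the two-step contraction
`s^(k+1) ≤ (1 - n β^k β^(k-1)) s^(k-1)`.
Along odd indices this reads `x_(j+1) ≤ (1 - a_j) x_j`, hence `x_j ≤ exp (-∑_(i<j) a_i) x_0`,
which tends to `0` when `∑ a_j = ∞`; monotonicity transfers the limit to all of `s`.
-/

open Filter Finset Topology

theorem le_exp_neg_sum_mul_of_le_one_sub_mul {x a : ℕ → ℝ} (hx0 : ∀ k, 0 ≤ x k)
    (hx : ∀ k, x (k + 1) ≤ (1 - a k) * x k) (k : ℕ) :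
    x k ≤ Real.exp (-∑ i ∈ range k, a i) * x 0 := by
  induction k with
  | zero => simp
  | succ k ih =>
    calc x (k + 1) ≤ (1 - a k) * x k := hx k
      _ ≤ Real.exp (-a k) * x k := by
          gcongr
          · exact hx0 k
          · linarith [Real.add_one_le_exp (-a k)]
      _ ≤ Real.exp (-a k) * (Real.exp (-∑ i ∈ range k, a i) * x 0) := by gcongr
      _ = Real.exp (-∑ i ∈ range (k + 1), a i) * x 0 := by
          rw [← mul_assoc, ← Real.exp_add, sum_range_succ]
          ring_nf

theorem tendsto_zero_of_le_one_sub_mul_of_not_summable {x a : ℕ → ℝ} (hx0 : ∀ k, 0 ≤ x k)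
    (ha : ∀ k, 0 ≤ a k) (hx : ∀ k, x (k + 1) ≤ (1 - a k) * x k) (hna : ¬ Summable a) :
    Tendsto x atTop (𝓝 0) := by
  have hsum : Tendsto (fun k => ∑ i ∈ range k, a i) atTop atTop :=
    (not_summable_iff_tendsto_nat_atTop_of_nonneg ha).mp hna
  have hbound : Tendsto (fun k => Real.exp (-∑ i ∈ range k, a i) * x 0) atTop (𝓝 0) := by
    simpa using (Real.tendsto_exp_neg_atTop_nhds_zero.comp hsum).mul_const (x 0)
  exact tendsto_of_tendsto_of_tendsto_of_le_of_le tendsto_const_nhds hbound hx0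
    (le_exp_neg_sum_mul_of_le_one_sub_mul hx0 hx)

section CoupledRecursion

variable {β s t : ℕ → ℝ}

theorem antitone_of_le_convex_comb (hβ : ∀ k, 0 ≤ β k) (hts : ∀ k, t k ≤ s k)
    (hs : ∀ k, s (k + 1) ≤ β k * t k + (1 - β k) * s k) : Antitone s :=
  antitone_nat_of_succ_le fun k => by
    nlinarith [hs k, mul_le_mul_of_nonneg_left (hts k) (hβ k)]

theorem le_one_sub_mul_mul_of_coupled (c : ℝ) (hβ0 : ∀ k, 0 ≤ β k)
    (hβ1 : ∀ k, β k ≤ 1) (hts : ∀ k, t k ≤ s k)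
    (hs : ∀ k, s (k + 1) ≤ β k * t k + (1 - β k) * s k)
    (ht : ∀ k, t (k + 1) ≤ (1 - c * β k) * s k) (m : ℕ) :
    s (m + 2) ≤ (1 - c * β (m + 1) * β m) * s m := by
  have hanti := antitone_of_le_convex_comb hβ0 hts hs
  calc s (m + 2) ≤ β (m + 1) * t (m + 1) + (1 - β (m + 1)) * s (m + 1) := hs (m + 1)
    _ ≤ β (m + 1) * ((1 - c * β m) * s m) + (1 - β (m + 1)) * s m := by
        gcongr
        · exact hβ0 (m + 1)
        · exact ht m
        · linarith [hβ1 (m + 1)]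
        · exact hanti (Nat.le_succ m)
    _ = (1 - c * β (m + 1) * β m) * s m := by ring

end CoupledRecursion

/-- For coupled nonnegative sequences satisfying the contraction inequalities,
`s^(k+1) ≤ (1 - n β^k β^(k-1)) s^(k-1)` for `k ≥ 1`; and if
`∑_{k≥1} β^(2k) β^(2k-1) = ∞`, then `s^k → 0`. -/
theorem stmt14 (n : ℕ) (hn : 1 ≤ n) (β s t : ℕ → ℝ)
    (hβ : ∀ k, 0 < β k ∧ (n : ℝ) * β k ≤ 1) (hβ1 : ∀ k, β k ≤ 1)
    (hst : ∀ k, 0 ≤ t k ∧ t k ≤ s k)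
    (hs : ∀ k, s (k + 1) ≤ β k * t k + (1 - β k) * s k)
    (ht : ∀ k, t (k + 1) ≤ (1 - (n : ℝ) * β k) * s k) :
    (∀ k, 1 ≤ k → s (k + 1) ≤ (1 - (n : ℝ) * β k * β (k - 1)) * s (k - 1)) ∧
      (¬ Summable (fun k : ℕ => β (2 * k + 2) * β (2 * k + 1)) →
        Filter.Tendsto s Filter.atTop (nhds 0)) := by
  have hβ0 k := (hβ k).1.le
  have hts k := (hst k).2
  have hs0 k := (hst k).1.trans (hst k).2
  have hstep := le_one_sub_mul_mul_of_coupled n hβ0 hβ1 hts hs ht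
  refine ⟨fun k hk => ?_, fun hns => ?_⟩
  · obtain ⟨m, rfl⟩ := Nat.exists_eq_add_of_le' hk
    exact hstep m
  · have hn0 : (n : ℝ) ≠ 0 := by exact_mod_cast Nat.one_le_iff_ne_zero.mp hn
    have hodd : Tendsto (fun j => s (2 * j + 1)) atTop (𝓝 0) := by
      refine tendsto_zero_of_le_one_sub_mul_of_not_summable
        (a := fun j => n * β (2 * j + 2) * β (2 * j + 1)) (fun j => hs0 _) (fun j => ?_)
        (fun j => hstep (2 * j + 1)) ?_
      · exact mul_nonneg (mul_nonneg n.cast_nonneg (hβ0 _)) (hβ0 _)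
      · simpa only [mul_assoc, summable_mul_left_iff hn0] using hns
    exact (tendsto_iff_tendsto_subseq_of_antitone (antitone_of_le_convex_comb hβ0 hts hs)
      (φ := fun j => 2 * j + 1)
      (tendsto_atTop_mono (fun j => show j ≤ 2 * j + 1 by omega) tendsto_id)).mpr hodd
end

section
/- Let G^0, G^1, … be directed graphs on vertex set {1,…,n}, each containing a self-loop at every node, and let μ_0 = 0 and μ_{k+1} = μ_k + b_{k+1} for positive integers b_k such that the union of edges in each block [μ_k, μ_{k+1}−1] is strongly connected. Then for any l ≥ 0 and any node i, the set of nodes reachable from i via time-respecting paths using one edge from each of G^{μ_l}, G^{μ_l + 1}, …, G^{μ_{l+n}−1} is all of {1,…,n}. -/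
/-!
The nodes reachable from `i` by time-respecting paths starting at the beginning of block `l`
form a set that can only grow from one block boundary to the next, because self-loops let a
path wait. While this set is not everything, strong connectivity of the union graph of the next
block yields an edge of that block leaving it, which the path can take at its time; so the set
strictly grows with every block and covers all `n` nodes after `n` blocks.
-/

theorem Relation.ReflTransGen.exists_mem_notMem_rel {α : Type*} {r : α → α → Prop}
    {S : Set α} {a b : α} (h : Relation.ReflTransGen r a b) (ha : a ∈ S) (hb : b ∉ S) :
    ∃ x y, x ∈ S ∧ y ∉ S ∧ r x y := by
  induction h with
  | refl => exact absurd ha hb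
  | @tail x y _ hxy ih =>
    by_cases hx : x ∈ S
    · exact ⟨x, y, hx, hb, hxy⟩
    · exact ih hx

theorem Monotone.apply_natCard_eq_univ {α : Type*} [Finite α] {S : ℕ → Set α}
    (hS : Monotone S) (hgrow : ∀ m, S m ≠ Set.univ → S m ⊂ S (m + 1)) :
    S (Nat.card α) = Set.univ := by
  have hcard : ∀ m, S m = Set.univ ∨ m ≤ (S m).ncard := by
    intro m
    induction m with
    | zero => exact Or.inr (Nat.zero_le _)
    | succ m ih =>
      by_cases hm : S m = Set.univ
      · exact Or.inl (Set.eq_univ_of_univ_subset (hm ▸ hS m.le_succ))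
      · exact Or.inr ((ih.resolve_left hm).trans_lt (Set.ncard_lt_ncard (hgrow m hm)))
  rcases hcard (Nat.card α) with h | hle
  · exact h
  by_contra hne
  have := Set.ncard_lt_ncard (Set.ssubset_univ_iff.2 hne) (Set.toFinite _)
  rw [Set.ncard_univ] at this
  omega

section TimeRespecting

variable {α : Type*} (G : ℕ → α → α → Prop)

def TimeReachable (a c : ℕ) (i j : α) : Prop :=
  ∃ f : ℕ → α, f a = i ∧ f c = j ∧ ∀ t, a ≤ t → t < c → G t (f t) (f (t + 1))

def timeReachableSet (a c : ℕ) (i : α) : Set α := {j | TimeReachable G a c i j}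

variable {G}

theorem TimeReachable.refl (hself : ∀ t x, G t x x) (a c : ℕ) (x : α) :
    TimeReachable G a c x x :=
  ⟨fun _ => x, rfl, rfl, fun t _ _ => hself t x⟩

theorem TimeReachable.single {t : ℕ} {x y : α} (h : G t x y) :
    TimeReachable G t (t + 1) x y := by
  classical
  exact ⟨fun s => if s = t + 1 then y else x, by simp, by simp, fun s hts hst => by
    obtain rfl : s = t := by omega
    simpa using h⟩

theorem TimeReachable.trans {a c d : ℕ} (hac : a ≤ c) (hcd : c ≤ d) {x y z : α}
    (h₁ : TimeReachable G a c x y) (h₂ : TimeReachable G c d y z) :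
    TimeReachable G a d x z := by
  obtain ⟨f₁, hf₁a, hf₁c, hf₁⟩ := h₁
  obtain ⟨f₂, hf₂c, hf₂d, hf₂⟩ := h₂
  refine ⟨fun t => if t < c then f₁ t else f₂ t, ?_, by simp [hcd.not_gt, hf₂d], ?_⟩
  · rcases hac.lt_or_eq with h | rfl
    · simp [h, hf₁a]
    · simp [hf₂c, ← hf₁c, hf₁a]
  · intro t hat htd
    rcases lt_trichotomy (t + 1) c with h | h | h
    · simpa [h, (Nat.lt_succ_self t).trans h] using hf₁ t hat (by omega)
    · have ht : t < c := by omega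
      simp only [ht, h.not_lt, if_true, if_false]
      rw [h, hf₂c, ← hf₁c, ← h]
      exact hf₁ t hat ht
    · simpa [show ¬t < c by omega, show ¬t + 1 < c by omega] using hf₂ t (by omega) htd

theorem timeReachableSet_mono (hself : ∀ t x, G t x x) {a c d : ℕ} (hac : a ≤ c) (hcd : c ≤ d)
    (i : α) :
    timeReachableSet G a c i ⊆ timeReachableSet G a d i :=
  fun _ hx => hx.trans hac hcd (TimeReachable.refl hself _ _ _)

theorem timeReachableSet_ssubset (hself : ∀ t x, G t x x) {a c d : ℕ} (hac : a ≤ c) (hcd : c ≤ d)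
    (i : α)
    (hconn : ∀ x y, Relation.ReflTransGen (fun x y => ∃ t, c ≤ t ∧ t < d ∧ G t x y) x y)
    (hne : timeReachableSet G a c i ≠ Set.univ) :
    timeReachableSet G a c i ⊂ timeReachableSet G a d i := by
  obtain ⟨j, hj⟩ := (Set.ne_univ_iff_exists_notMem _).1 hne
  obtain ⟨x, y, hx, hy, t, hct, htd, hxy⟩ :=
    (hconn i j).exists_mem_notMem_rel (TimeReachable.refl hself a c i) hj
  have hxt : TimeReachable G a t i x := hx.trans hac hct (TimeReachable.refl hself c t x)
  have hyd : TimeReachable G a (t + 1) i y :=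
    hxt.trans (hac.trans hct) t.le_succ (TimeReachable.single hxy)
  refine Set.ssubset_iff_of_subset (timeReachableSet_mono hself hac hcd i) |>.2 ⟨y, ?_, hy⟩
  exact hyd.trans (by omega) htd (TimeReachable.refl hself _ _ y)

end TimeRespecting

theorem stmt16_general {n : ℕ} (G : ℕ → Fin n → Fin n → Prop)
    (hself : ∀ k i, G k i i)
    (b : ℕ → ℕ)
    (μ : ℕ → ℕ) (hμ : ∀ k, μ (k + 1) = μ k + b (k + 1))
    (hconn : ∀ k, ∀ i j : Fin n,
      Relation.ReflTransGen (fun a c => ∃ t, μ k ≤ t ∧ t < μ (k + 1) ∧ G t a c) i j) :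
    ∀ l : ℕ, ∀ i j : Fin n, ∃ f : ℕ → Fin n, f (μ l) = i ∧ f (μ (l + n)) = j ∧
      ∀ t, μ l ≤ t → t < μ (l + n) → G t (f t) (f (t + 1)) := by
  intro l i j
  have hμmono : Monotone μ := monotone_nat_of_le_succ fun k => by simp [hμ]
  have hle : ∀ m, μ l ≤ μ (l + m) := fun m => hμmono (Nat.le_add_right l m)
  have hstep : ∀ m, μ (l + m) ≤ μ (l + (m + 1)) := fun m => hμmono (by omega)
  have hall : timeReachableSet G (μ l) (μ (l + Nat.card (Fin n))) i = Set.univ := by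
    exact Monotone.apply_natCard_eq_univ (S := fun m => timeReachableSet G (μ l) (μ (l + m)) i)
      (monotone_nat_of_le_succ fun m => timeReachableSet_mono hself (hle m) (hstep m) i)
      fun m => timeReachableSet_ssubset hself (hle m) (hstep m) i (hconn (l + m))
  rw [Nat.card_fin] at hall
  exact Set.eq_univ_iff_forall.1 hall j

/-- Under block strong connectivity of the union graphs and self-loops at every node,
every node is reachable from every node via a time-respecting path over any window
of `n` consecutive blocks. -/
theorem stmt16 {n : ℕ} (hn : 0 < n) (G : ℕ → Fin n → Fin n → Prop)
    (hself : ∀ k i, G k i i)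
    (b : ℕ → ℕ) (hb : ∀ k, 0 < b k)
    (μ : ℕ → ℕ) (hμ0 : μ 0 = 0) (hμ : ∀ k, μ (k + 1) = μ k + b (k + 1))
    (hconn : ∀ k, ∀ i j : Fin n,
      Relation.ReflTransGen (fun a c => ∃ t, μ k ≤ t ∧ t < μ (k + 1) ∧ G t a c) i j) :
    ∀ l : ℕ, ∀ i j : Fin n, ∃ f : ℕ → Fin n, f (μ l) = i ∧ f (μ (l + n)) = j ∧
      ∀ t, μ l ≤ t → t < μ (l + n) → G t (f t) (f (t + 1)) :=
  stmt16_general G hself b μ hμ hconn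
end
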